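/- arXiv:1903.05298 — 7 statements merged into one kernel-verified Lean document; each statement's English description precedes it below -/
import Mathlib

section
/- Let r ∈ ℝ with -2 < r < 2. Then every A ∈ SL(2,ℝ) with tr A = r is conjugate in SL(2,ℝ) to a rotation matrix R_θ = [[cos θ, -sin θ],[sin θ, cos θ]] for some θ ∈ ℝ with 2 cos θ = r. -/
/-!
The lower-left entry `c` of `A = !![a, b; c, d]` cannot vanish, since otherwise `a * d = 1`
forces `(a + d) ^ 2 ≥ 4`. Choose `θ` with `cos θ = r / 2` and `sin θ` of the same sign as `c`;
then `c / sin θ = q ^ 2` for some `q ≠ 0`, and the upper triangular matrix `!![q⁻¹, β; 0, q]`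
with `β = (a - cos θ) / (q * sin θ)` conjugates the rotation by `θ` to `A`.
-/

open Matrix Real

theorem lower_left_ne_zero_of_sq_add_lt_four {K : Type*} [Field K] [LinearOrder K]
    [IsStrictOrderedRing K] {a b c d : K} (hdet : a * d - b * c = 1) (htr : (a + d) ^ 2 < 4) :
    c ≠ 0 := by
  rintro rfl
  nlinarith [sq_nonneg (a - d)]

theorem fin_two_mul_upperTriangular_eq_mul_rotation {K : Type*} [Field K]
    {a b c d co si q β : K} (hdet : a * d - b * c = 1) (htr : a + d = 2 * co)
    (hcs : co ^ 2 + si ^ 2 = 1) (hsi : si ≠ 0) (hq : q ≠ 0) (hc : c = q ^ 2 * si)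
    (ha : a - co = q * β * si) :
    !![a, b; c, d] * !![q⁻¹, β; 0, q] = !![q⁻¹, β; 0, q] * !![co, -si; si, co] := by
  simp only [mul_fin_two, EmbeddingLike.apply_eq_iff_eq, vecCons_inj, and_true]
  refine ⟨⟨?_, ?_⟩, ?_, ?_⟩ <;> field_simp
  · linear_combination ha
  · apply mul_left_cancel₀ hsi
    linear_combination (co - a) * ha - b * hc + hcs - hdet + a * htr
  · linear_combination hc
  · linear_combination β * hc - q * ha + q * htr

theorem exists_cos_eq_and_div_sin_pos {x c : ℝ} (hx₁ : -1 < x) (hx₂ : x < 1) (hc : c ≠ 0) :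
    ∃ θ, cos θ = x ∧ 0 < c / sin θ := by
  have hsin : 0 < sin (arccos x) :=
    sin_pos_of_pos_of_lt_pi (arccos_pos.2 hx₂) (arccos_lt_pi.2 hx₁)
  have hcos : cos (arccos x) = x := cos_arccos hx₁.le hx₂.le
  rcases hc.lt_or_gt with hc | hc
  · refine ⟨-arccos x, by rwa [cos_neg], ?_⟩
    rw [sin_neg]
    exact div_pos_of_neg_of_neg hc (neg_lt_zero.2 hsin)
  · exact ⟨arccos x, hcos, div_pos hc hsin⟩

/-- For `r ∈ ℝ` with `-2 < r < 2`, every `A ∈ SL(2,ℝ)` with `tr A = r`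
is conjugate in `SL(2,ℝ)` to a rotation matrix `R_θ = [[cos θ, -sin θ],[sin θ, cos θ]]`
with `2 cos θ = r`. -/
theorem trace_fiber_elliptic_SL2R
    (r : ℝ) (h1 : -2 < r) (h2 : r < 2)
    (A : Matrix.SpecialLinearGroup (Fin 2) ℝ)
    (hA : Matrix.trace (A : Matrix (Fin 2) (Fin 2) ℝ) = r) :
    ∃ θ : ℝ, 2 * Real.cos θ = r ∧
      ∃ g : Matrix.SpecialLinearGroup (Fin 2) ℝ,
        (A : Matrix (Fin 2) (Fin 2) ℝ) =
          (g : Matrix (Fin 2) (Fin 2) ℝ) *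
            !![Real.cos θ, -Real.sin θ; Real.sin θ, Real.cos θ] *
            ((g⁻¹ : Matrix.SpecialLinearGroup (Fin 2) ℝ) : Matrix (Fin 2) (Fin 2) ℝ) := by
  obtain ⟨a, b, c, d, hAeq⟩ : ∃ a b c d : ℝ, (A : Matrix (Fin 2) (Fin 2) ℝ) = !![a, b; c, d] :=
    ⟨_, _, _, _, eta_fin_two _⟩
  have hdet : a * d - b * c = 1 := by simpa [hAeq, det_fin_two_of] using A.det_coe
  have htr : a + d = r := by simpa [hAeq, trace_fin_two_of] using hA
  have hc : c ≠ 0 := lower_left_ne_zero_of_sq_add_lt_four hdet (by nlinarith)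
  obtain ⟨θ, hcos, hpos⟩ :=
    exists_cos_eq_and_div_sin_pos (x := r / 2) (by linarith) (by linarith) hc
  have hsin : sin θ ≠ 0 := by rintro h; simp [h] at hpos
  set q := √(c / sin θ)
  have hq : q ≠ 0 := (sqrt_pos.2 hpos).ne'
  let R : SpecialLinearGroup (Fin 2) ℝ :=
    ⟨!![cos θ, -sin θ; sin θ, cos θ], by simp [det_fin_two_of, ← sq, cos_sq_add_sin_sq]⟩
  let g : SpecialLinearGroup (Fin 2) ℝ :=
    ⟨!![q⁻¹, (a - cos θ) / (q * sin θ); 0, q], by simp [det_fin_two_of, hq]⟩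
  have hgR : A * g = g * R := Subtype.coe_injective <| by
    change (A : Matrix (Fin 2) (Fin 2) ℝ) * g = g * R
    rw [hAeq]
    refine fin_two_mul_upperTriangular_eq_mul_rotation hdet (by linarith) (cos_sq_add_sin_sq θ)
      hsin hq ?_ (by field_simp)
    rw [sq_sqrt hpos.le, div_mul_cancel₀ c hsin]
  refine ⟨θ, by linarith, g, ?_⟩
  rw [eq_mul_inv_of_mul_eq hgR]
  rfl
end

section
/- The fiber Tr⁻¹(2) of the trace map Tr : SL(2,ℝ) → ℝ consists of exactly three conjugacy classes: every A ∈ SL(2,ℝ) with tr A = 2 is either equal to I₂, or conjugate in SL(2,ℝ) to [[1,1],[0,1]], or conjugate in SL(2,ℝ) to [[1,-1],[0,1]], and exactly one of these three alternatives holds; in particular [[1,1],[0,1]] and [[1,-1],[0,1]] are not conjugate in SL(2,ℝ). -/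
/-!
If `A ∈ SL(2,ℝ)` has trace `2` and `A ≠ 1`, then `N = A - 1` satisfies `N² = 0` and `N ≠ 0`, so for
a vector `v` with `N v ≠ 0` the change of basis `P = [N v | v]` gives `A P = P [[1,1],[0,1]]`.
Rescaling `P` to determinant `±1` (and flipping the sign of the second column, which turns
`[[1,1],[0,1]]` into `[[1,-1],[0,1]]`) yields a conjugator in `SL(2,ℝ)`; which unipotent matrix
appears is decided by the sign of `det P`. That sign is a genuine invariant: `g [[1,1],[0,1]] =
[[1,-1],[0,1]] g` forces `g = [[-s,q],[0,s]]`, of determinant `-s² ≠ 1`.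
-/

/-- The unipotent matrix `[[1,1],[0,1]]` as an element of `SL(2,ℝ)`. -/
def unipPlusSL2R : Matrix.SpecialLinearGroup (Fin 2) ℝ :=
  ⟨!![1, 1; 0, 1], by norm_num [Matrix.det_fin_two_of]⟩

/-- The unipotent matrix `[[1,-1],[0,1]]` as an element of `SL(2,ℝ)`. -/
def unipMinusSL2R : Matrix.SpecialLinearGroup (Fin 2) ℝ :=
  ⟨!![1, -1; 0, 1], by norm_num [Matrix.det_fin_two_of]⟩

open Matrix
open scoped MatrixGroups

theorem exists_eq_conj_iff_isConj {G : Type*} [Group G] (a b : G) :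
    (∃ g, b = g * a * g⁻¹) ↔ IsConj a b := by
  simp only [isConj_iff, eq_comm]

theorem Matrix.exists_det_ne_zero_mul_eq_mul_unipotent {K : Type*} [Field K]
    (A : Matrix (Fin 2) (Fin 2) K) (htr : A.trace = 2) (hdet : A.det = 1) (hA : A ≠ 1) :
    ∃ P : Matrix (Fin 2) (Fin 2) K, P.det ≠ 0 ∧ A * P = P * !![1, 1; 0, 1] := by
  obtain ⟨a, b, c, d, rfl⟩ : ∃ a b c d, A = !![a, b; c, d] := ⟨_, _, _, _, A.eta_fin_two⟩
  rw [trace_fin_two_of] at htr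
  rw [det_fin_two_of] at hdet
  by_cases hc : c = 0
  · subst hc
    have ha : a = 1 := by
      have : (a - 1) ^ 2 = 0 := by linear_combination a * htr - hdet
      exact sub_eq_zero.mp (pow_eq_zero_iff two_ne_zero |>.mp this)
    have hd : d = 1 := by linear_combination htr - ha
    subst ha hd
    have hb : b ≠ 0 := by rintro rfl; exact hA (one_fin_two).symm
    refine ⟨!![b, 0; 0, 1], by simpa using hb, ?_⟩
    simp
  · refine ⟨!![a - 1, 1; c, 0], by simpa using hc, ?_⟩
    have h00 : a * (a - 1) + b * c = a - 1 := by linear_combination a * htr - hdet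
    have h10 : c * (a - 1) + d * c = c := by linear_combination c * htr
    rw [mul_fin_two, mul_fin_two, h00, h10]
    simp

theorem isConj_of_mul_eq_mul_of_det_pos {A U : SL(2, ℝ)} {P : Matrix (Fin 2) (Fin 2) ℝ}
    (hP : 0 < P.det) (h : (A : Matrix (Fin 2) (Fin 2) ℝ) * P = P * U) : IsConj U A := by
  have hQ : ((√P.det)⁻¹ • P).det = 1 := by
    rw [det_smul, Fintype.card_fin, inv_pow, Real.sq_sqrt hP.le, inv_mul_cancel₀ hP.ne']
  obtain ⟨g, hg⟩ : ∃ g : SL(2, ℝ), (g : Matrix (Fin 2) (Fin 2) ℝ) = (√P.det)⁻¹ • P :=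
    ⟨⟨_, hQ⟩, rfl⟩
  refine isConj_iff.mpr ⟨g, mul_inv_eq_iff_eq_mul.mpr (Subtype.val_injective ?_)⟩
  change (g : Matrix (Fin 2) (Fin 2) ℝ) * U = A * g
  rw [hg, Matrix.smul_mul, Matrix.mul_smul, h]

theorem isConj_unipPlusSL2R_or_unipMinusSL2R_of_trace_eq_two {A : SL(2, ℝ)}
    (htr : (A : Matrix (Fin 2) (Fin 2) ℝ).trace = 2) (hA : A ≠ 1) :
    IsConj unipPlusSL2R A ∨ IsConj unipMinusSL2R A := by
  obtain ⟨P, hP, hAP⟩ := exists_det_ne_zero_mul_eq_mul_unipotent (A : Matrix (Fin 2) (Fin 2) ℝ)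
    htr A.2 fun h => hA (Subtype.ext h)
  rcases hP.lt_or_gt with hneg | hpos
  · have hflip : !![(1 : ℝ), 1; 0, 1] * !![1, 0; 0, -1] = !![1, 0; 0, -1] * !![1, -1; 0, 1] := by
      simp
    refine .inr (isConj_of_mul_eq_mul_of_det_pos (P := P * !![1, 0; 0, -1]) ?_ ?_)
    · simpa [det_fin_two_of] using hneg
    · rw [← mul_assoc, hAP, mul_assoc, hflip, ← mul_assoc]
      rfl
  · exact .inl (isConj_of_mul_eq_mul_of_det_pos hpos hAP)

theorem unipPlusSL2R_ne_one : unipPlusSL2R ≠ 1 := fun h => by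
  simpa [unipPlusSL2R] using congrArg (fun g : SL(2, ℝ) => (g : Matrix (Fin 2) (Fin 2) ℝ) 0 1) h

theorem unipMinusSL2R_ne_one : unipMinusSL2R ≠ 1 := fun h => by
  simpa [unipMinusSL2R] using congrArg (fun g : SL(2, ℝ) => (g : Matrix (Fin 2) (Fin 2) ℝ) 0 1) h

theorem not_isConj_unipPlusSL2R_unipMinusSL2R : ¬IsConj unipPlusSL2R unipMinusSL2R := by
  rw [isConj_iff]
  rintro ⟨g, hg⟩
  have hm : (g : Matrix (Fin 2) (Fin 2) ℝ) * !![1, 1; 0, 1] =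
      !![1, -1; 0, 1] * (g : Matrix (Fin 2) (Fin 2) ℝ) :=
    congrArg (fun h : SL(2, ℝ) => (h : Matrix (Fin 2) (Fin 2) ℝ)) (mul_inv_eq_iff_eq_mul.mp hg)
  obtain ⟨p, q, r, s, hpqrs⟩ : ∃ p q r s, (g : Matrix (Fin 2) (Fin 2) ℝ) = !![p, q; r, s] :=
    ⟨_, _, _, _, eta_fin_two _⟩
  have hdet : p * s - q * r = 1 := by rw [← det_fin_two_of, ← hpqrs]; exact g.2
  rw [hpqrs, mul_fin_two, mul_fin_two] at hm
  have h00 : r = 0 := by simpa using congrFun₂ hm 0 0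
  have h01 : p + q = q + -s := by simpa using congrFun₂ hm 0 1
  subst h00
  obtain rfl : p = -s := by linarith
  nlinarith [sq_nonneg s]

/-- The fiber `Tr⁻¹(2)` in `SL(2,ℝ)` consists of exactly three
conjugacy classes: every `A` with `tr A = 2` is either `I₂`, or conjugate to
`[[1,1],[0,1]]`, or conjugate to `[[1,-1],[0,1]]`, and exactly one of these holds; in
particular the two unipotent matrices are not conjugate in `SL(2,ℝ)`. -/
theorem trace_two_fiber_SL2R :
    (∀ A : Matrix.SpecialLinearGroup (Fin 2) ℝ,
      Matrix.trace (A : Matrix (Fin 2) (Fin 2) ℝ) = 2 →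
        ((A = 1 ∨ (∃ g, A = g * unipPlusSL2R * g⁻¹) ∨ (∃ g, A = g * unipMinusSL2R * g⁻¹)) ∧
         ¬(A = 1 ∧ ∃ g, A = g * unipPlusSL2R * g⁻¹) ∧
         ¬(A = 1 ∧ ∃ g, A = g * unipMinusSL2R * g⁻¹) ∧
         ¬((∃ g, A = g * unipPlusSL2R * g⁻¹) ∧ (∃ g, A = g * unipMinusSL2R * g⁻¹)))) ∧
    ¬ ∃ g : Matrix.SpecialLinearGroup (Fin 2) ℝ,
        unipMinusSL2R = g * unipPlusSL2R * g⁻¹ := by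
  simp only [exists_eq_conj_iff_isConj]
  refine ⟨fun A htr => ⟨?_, ?_, ?_, ?_⟩, not_isConj_unipPlusSL2R_unipMinusSL2R⟩
  · exact or_iff_not_imp_left.mpr (isConj_unipPlusSL2R_or_unipMinusSL2R_of_trace_eq_two htr)
  · rintro ⟨rfl, h⟩
    exact unipPlusSL2R_ne_one (isConj_one_left.mp h)
  · rintro ⟨rfl, h⟩
    exact unipMinusSL2R_ne_one (isConj_one_left.mp h)
  · rintro ⟨hplus, hminus⟩
    exact not_isConj_unipPlusSL2R_unipMinusSL2R (hplus.trans hminus.symm)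
end

section
/- The fiber Tr⁻¹(2) = {A ∈ SL(2,ℝ) : tr A = 2}, with the subspace topology induced from the matrix entries, is homeomorphic to the real cone V(x² + y² - z²) = {(x,y,z) ∈ ℝ³ : x² + y² = z²}; under such a homeomorphism the identity matrix I₂ corresponds to the singular point (0,0,0), and the two connected components of the complement of the singular point correspond to the two unipotent conjugacy classes. -/
/-- `SL(2,ℝ)` carries the topology induced from the matrix entries. -/
instance : TopologicalSpace (Matrix.SpecialLinearGroup (Fin 2) ℝ) :=
  TopologicalSpace.induced
    ((↑) : Matrix.SpecialLinearGroup (Fin 2) ℝ → Matrix (Fin 2) (Fin 2) ℝ) inferInstance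

/-- The real cone `V(x² + y² - z²) ⊆ ℝ³`. -/
def coneV : Set (ℝ × ℝ × ℝ) := {p | p.1 ^ 2 + p.2.1 ^ 2 = p.2.2 ^ 2}

/-- The complement of the singular point `(0,0,0)` in the cone. -/
def conePunctured : Set coneV := {q | (q : ℝ × ℝ × ℝ) ≠ (0, 0, 0)}

/-- The fiber `Tr⁻¹(2)` of the trace map on `SL(2,ℝ)`. -/
def traceTwoFiberR : Set (Matrix.SpecialLinearGroup (Fin 2) ℝ) :=
  {A | Matrix.trace (A : Matrix (Fin 2) (Fin 2) ℝ) = 2}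

/-- The conjugacy class of `[[1,1],[0,1]]`, viewed inside the fiber `Tr⁻¹(2)`. -/
def unipPlusClass : Set traceTwoFiberR :=
  {x | ∃ g : Matrix.SpecialLinearGroup (Fin 2) ℝ,
    (x : Matrix.SpecialLinearGroup (Fin 2) ℝ) = g * unipPlusSL2R * g⁻¹}

/-- The conjugacy class of `[[1,-1],[0,1]]`, viewed inside the fiber `Tr⁻¹(2)`. -/
def unipMinusClass : Set traceTwoFiberR :=
  {x | ∃ g : Matrix.SpecialLinearGroup (Fin 2) ℝ,
    (x : Matrix.SpecialLinearGroup (Fin 2) ℝ) = g * unipMinusSL2R * g⁻¹}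

/-!
Writing `A = [[a, b], [c, d]]`, the affine map `A ↦ (a - 1, (b + c) / 2, (b - c) / 2)`
identifies `Tr⁻¹(2)` with the cone: `ad - bc = 1` and `a + d = 2` give exactly
`x² + y² = z²`, and `I₂` goes to the vertex. If `g ∈ SL(2,ℝ)` has first column `(p, r)`, then
`g [[1, ε], [0, 1]] g⁻¹` goes to `(-εpr, ε(p² - r²)/2, ε(p² + r²)/2)`. Every `(p, r) ≠ 0` is
such a column, and choosing `p + ri = √(2(y - ix)/ε)` shows that these points fill the whole
sheet `εz > 0`. Hence the two unipotent classes go to the sheets `z > 0` and `z < 0`: open,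
connected as images of `ℝ² ∖ {0}`, and covering the punctured cone, so they are its connected
components.
-/

open scoped MatrixGroups

noncomputable section

lemma SL2_det_fin_two (g : SL(2, ℝ)) : g 0 0 * g 1 1 - g 0 1 * g 1 0 = 1 := by
  rw [← Matrix.det_fin_two]
  exact g.det_coe

lemma traceTwoFiberR_trace_fin_two (A : traceTwoFiberR) :
    (A : SL(2, ℝ)) 0 0 + (A : SL(2, ℝ)) 1 1 = 2 := by
  rw [← Matrix.trace_fin_two]
  exact A.2

@[fun_prop]
lemma continuous_traceTwoFiberR_entry (i j : Fin 2) :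
    Continuous fun A : traceTwoFiberR => (A : SL(2, ℝ)) i j :=
  (continuous_apply_apply i j).comp (continuous_induced_dom.comp continuous_subtype_val)

def fiberToCone (A : traceTwoFiberR) : coneV :=
  ⟨((A : SL(2, ℝ)) 0 0 - 1, ((A : SL(2, ℝ)) 0 1 + (A : SL(2, ℝ)) 1 0) / 2,
      ((A : SL(2, ℝ)) 0 1 - (A : SL(2, ℝ)) 1 0) / 2), by
    have hdet := SL2_det_fin_two A
    have htr := traceTwoFiberR_trace_fin_two A
    show _ = _
    linear_combination -hdet + (A : SL(2, ℝ)) 0 0 * htr⟩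

def coneToFiber (q : coneV) : traceTwoFiberR :=
  ⟨⟨!![1 + q.1.1, q.1.2.1 + q.1.2.2; q.1.2.1 - q.1.2.2, 1 - q.1.1], by
      have hq : q.1.1 ^ 2 + q.1.2.1 ^ 2 = q.1.2.2 ^ 2 := q.2
      rw [Matrix.det_fin_two_of]
      linear_combination -hq⟩, by
    show Matrix.trace !![_, _; _, _] = _
    rw [Matrix.trace_fin_two_of]
    ring⟩

def fiberHomeomorphCone : traceTwoFiberR ≃ₜ coneV where
  toFun := fiberToCone
  invFun := coneToFiber
  left_inv A := by
    have htr := traceTwoFiberR_trace_fin_two A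
    ext i j
    fin_cases i <;> fin_cases j <;> simp [coneToFiber, fiberToCone] <;> linarith
  right_inv q := by
    ext <;> simp [coneToFiber, fiberToCone]
  continuous_toFun := by
    unfold fiberToCone
    fun_prop
  continuous_invFun := by
    refine (continuous_induced_rng.2 (continuous_matrix fun i j => ?_)).subtype_mk _
    fin_cases i <;> fin_cases j <;> simp <;> fun_prop

lemma Prod.sq_add_sq_pos {v : ℝ × ℝ} (hv : v ≠ 0) : 0 < v.1 ^ 2 + v.2 ^ 2 := by
  rcases v with ⟨p, r⟩
  rw [Ne, Prod.mk_eq_zero, not_and_or] at hv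
  rcases hv with h | h <;> positivity

def shear (ε : ℝ) : SL(2, ℝ) :=
  ⟨!![1, ε; 0, 1], by simp [Matrix.det_fin_two_of]⟩

def shearClass (ε : ℝ) : Set traceTwoFiberR :=
  {x | ∃ g : SL(2, ℝ), (x : SL(2, ℝ)) = g * shear ε * g⁻¹}

lemma unipPlusClass_eq_shearClass : unipPlusClass = shearClass 1 := rfl

lemma unipMinusClass_eq_shearClass : unipMinusClass = shearClass (-1) := rfl

lemma coe_conj_shear (g : SL(2, ℝ)) (ε : ℝ) :
    ((g * shear ε * g⁻¹ : SL(2, ℝ)) : Matrix (Fin 2) (Fin 2) ℝ) =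
      !![1 - ε * g 0 0 * g 1 0, ε * g 0 0 ^ 2; -(ε * g 1 0 ^ 2), 1 + ε * g 0 0 * g 1 0] := by
  have hdet := SL2_det_fin_two g
  rw [Matrix.SpecialLinearGroup.coe_mul, Matrix.SpecialLinearGroup.coe_mul,
    Matrix.SpecialLinearGroup.coe_inv, Matrix.adjugate_fin_two]
  ext i j
  fin_cases i <;> fin_cases j <;> simp [shear, Matrix.mul_apply, Fin.sum_univ_two]
  · linear_combination hdet
  · ring
  · ring
  · linear_combination hdet

lemma exists_SL2_first_column_eq {v : ℝ × ℝ} (hv : v ≠ 0) :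
    ∃ g : SL(2, ℝ), g 0 0 = v.1 ∧ g 1 0 = v.2 := by
  have hn : v.1 ^ 2 + v.2 ^ 2 ≠ 0 := (Prod.sq_add_sq_pos hv).ne'
  refine ⟨⟨!![v.1, -v.2 / (v.1 ^ 2 + v.2 ^ 2); v.2, v.1 / (v.1 ^ 2 + v.2 ^ 2)], ?_⟩, rfl, rfl⟩
  rw [Matrix.det_fin_two_of]
  field_simp
  ring

lemma exists_sq_sub_sq_eq_and_two_mul_eq (a b : ℝ) :
    ∃ p r : ℝ, p ^ 2 - r ^ 2 = a ∧ 2 * p * r = b := by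
  obtain ⟨w, hw⟩ := IsAlgClosed.exists_pow_nat_eq (⟨a, b⟩ : ℂ) two_pos
  refine ⟨w.re, w.im, ?_, ?_⟩
  · simpa [sq] using congrArg Complex.re hw
  · have := congrArg Complex.im hw
    simp only [sq, Complex.mul_im] at this
    linarith

def coneParam (ε : ℝ) (v : ℝ × ℝ) : coneV :=
  ⟨(-(ε * v.1 * v.2), ε * (v.1 ^ 2 - v.2 ^ 2) / 2, ε * (v.1 ^ 2 + v.2 ^ 2) / 2), by
    show _ = _
    ring⟩

lemma continuous_coneParam (ε : ℝ) : Continuous (coneParam ε) := by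
  unfold coneParam
  fun_prop

def coneSheet (ε : ℝ) : Set coneV := {q | 0 < ε * q.1.2.2}

lemma image_coneParam {ε : ℝ} (hε : ε ≠ 0) : coneParam ε '' {0}ᶜ = coneSheet ε := by
  ext q
  constructor
  · rintro ⟨v, hv, rfl⟩
    show 0 < ε * (ε * (v.1 ^ 2 + v.2 ^ 2) / 2)
    rw [← mul_div_assoc, ← mul_assoc, ← sq]
    exact div_pos (mul_pos (sq_pos_of_ne_zero hε) (Prod.sq_add_sq_pos hv)) two_pos
  · intro hq
    obtain ⟨⟨x, y, z⟩, hcone⟩ := q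
    change x ^ 2 + y ^ 2 = z ^ 2 at hcone
    change 0 < ε * z at hq
    set s := 2 / ε
    have hs : ε * s = 2 := mul_div_cancel₀ 2 hε
    have hsz : 0 < s * z := by
      rw [show s * z = s ^ 2 * (ε * z) / 2 by linear_combination (-(s * z) / 2) * hs]
      have hs0 : s ≠ 0 := right_ne_zero_of_mul (hs ▸ two_ne_zero : ε * s ≠ 0)
      exact div_pos (mul_pos (sq_pos_of_ne_zero hs0) hq) two_pos
    obtain ⟨p, r, hre, him⟩ := exists_sq_sub_sq_eq_and_two_mul_eq (s * y) (-(s * x))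
    -- `|w ^ 2| = |w| ^ 2` for `w = p + r i`
    have hnorm : p ^ 2 + r ^ 2 = s * z := by
      rw [← sq_eq_sq₀ (by positivity) hsz.le]
      linear_combination (p ^ 2 - r ^ 2 + s * y) * hre + (2 * p * r - s * x) * him + s ^ 2 * hcone
    refine ⟨(p, r), fun h0 => ?_, Subtype.ext ?_⟩
    · obtain ⟨rfl, rfl⟩ := Prod.mk_eq_zero.1 h0
      linarith
    · ext
      · show -(ε * p * r) = x
        linear_combination -(ε / 2) * him + x / 2 * hs
      · show ε * (p ^ 2 - r ^ 2) / 2 = y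
        linear_combination ε / 2 * hre + y / 2 * hs
      · show ε * (p ^ 2 + r ^ 2) / 2 = z
        linear_combination ε / 2 * hnorm + z / 2 * hs

lemma isPreconnected_coneSheet {ε : ℝ} (hε : ε ≠ 0) : IsPreconnected (coneSheet ε) := by
  have hrank : 1 < Module.rank ℝ (ℝ × ℝ) := by
    rw [rank_prod', Module.rank_self, one_add_one_eq_two]
    exact Cardinal.one_lt_two
  rw [← image_coneParam hε]
  exact (isConnected_compl_singleton_of_one_lt_rank hrank 0).isPreconnected.image _
    (continuous_coneParam ε).continuousOn

lemma isOpen_coneSheet (ε : ℝ) : IsOpen (coneSheet ε) :=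
  isOpen_lt continuous_const (by fun_prop)

lemma coneSheet_subset_conePunctured (ε : ℝ) : coneSheet ε ⊆ conePunctured := by
  intro q hq h
  simp [coneSheet, h] at hq

lemma conePunctured_subset_union {ε : ℝ} (hε : ε ≠ 0) :
    conePunctured ⊆ coneSheet ε ∪ coneSheet (-ε) := by
  rintro ⟨⟨x, y, z⟩, hcone⟩ hq
  change x ^ 2 + y ^ 2 = z ^ 2 at hcone
  have hz : z ≠ 0 := by
    rintro rfl
    have hx : x = 0 := by nlinarith [sq_nonneg x, sq_nonneg y]
    have hy : y = 0 := by nlinarith [sq_nonneg x, sq_nonneg y]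
    exact hq (by simp [hx, hy])
  rcases (mul_ne_zero hε hz : ε * z ≠ 0).lt_or_gt with h | h
  · exact Or.inr (show 0 < -ε * z by linarith)
  · exact Or.inl h

lemma connectedComponentIn_conePunctured {ε : ℝ} {p : coneV} (hp : p ∈ coneSheet ε) :
    connectedComponentIn conePunctured p = coneSheet ε := by
  have hε : ε ≠ 0 := by
    rintro rfl
    simp [coneSheet] at hp
  have hdisj : Disjoint (coneSheet ε) (coneSheet (-ε)) := by
    refine Set.disjoint_left.2 fun q h₁ h₂ => ?_
    change 0 < -ε * q.1.2.2 at h₂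
    linarith [show 0 < ε * q.1.2.2 from h₁]
  apply Set.Subset.antisymm
  · exact isPreconnected_connectedComponentIn.subset_left_of_subset_union
      (isOpen_coneSheet ε) (isOpen_coneSheet (-ε)) hdisj
      ((connectedComponentIn_subset _ _).trans (conePunctured_subset_union hε))
      ⟨p, mem_connectedComponentIn (coneSheet_subset_conePunctured ε hp), hp⟩
  · exact (isPreconnected_coneSheet hε).subset_connectedComponentIn hp
      (coneSheet_subset_conePunctured ε)

lemma fiberToCone_of_eq_conj_shear {ε : ℝ} {x : traceTwoFiberR} {g : SL(2, ℝ)}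
    (hx : (x : SL(2, ℝ)) = g * shear ε * g⁻¹) :
    fiberToCone x = coneParam ε (g 0 0, g 1 0) := by
  have hm := coe_conj_shear g ε
  rw [← hx] at hm
  ext <;> simp [fiberToCone, coneParam, hm] <;> ring

lemma image_shearClass {ε : ℝ} (hε : ε ≠ 0) :
    fiberHomeomorphCone '' shearClass ε = coneSheet ε := by
  rw [← image_coneParam hε]
  ext q
  constructor
  · rintro ⟨x, ⟨g, hx⟩, rfl⟩
    refine ⟨(g 0 0, g 1 0), fun h0 => ?_, (fiberToCone_of_eq_conj_shear hx).symm⟩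
    obtain ⟨h00, h10⟩ := Prod.mk_eq_zero.1 h0
    simpa [h00, h10] using SL2_det_fin_two g
  · rintro ⟨v, hv, rfl⟩
    obtain ⟨g, hg₀, hg₁⟩ := exists_SL2_first_column_eq hv
    refine ⟨coneToFiber (coneParam ε v), ⟨g, Subtype.ext ?_⟩,
      fiberHomeomorphCone.apply_symm_apply _⟩
    rw [coe_conj_shear, hg₀, hg₁]
    ext i j
    fin_cases i <;> fin_cases j <;> simp [coneToFiber, coneParam] <;> ring

end

/-- The fiber `Tr⁻¹(2) ⊆ SL(2,ℝ)` is homeomorphic to the real cone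
`V(x² + y² - z²) ⊆ ℝ³`; under such a homeomorphism, `I₂` corresponds to the singular
point `(0,0,0)`, and the two connected components of the complement of the singular point
correspond to the two unipotent conjugacy classes. -/
theorem trace_two_fiber_homeomorphic_cone :
    ∃ e : traceTwoFiberR ≃ₜ coneV,
      ((e ⟨1, by simp [traceTwoFiberR]⟩ : ℝ × ℝ × ℝ) = (0, 0, 0)) ∧
      (∃ p ∈ conePunctured, connectedComponentIn conePunctured p = e '' unipPlusClass) ∧
      (∃ p ∈ conePunctured, connectedComponentIn conePunctured p = e '' unipMinusClass) ∧
      e '' unipPlusClass ≠ e '' unipMinusClass ∧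
      (∀ p ∈ conePunctured,
        connectedComponentIn conePunctured p = e '' unipPlusClass ∨
        connectedComponentIn conePunctured p = e '' unipMinusClass) := by
  have hplus : fiberHomeomorphCone '' unipPlusClass = coneSheet 1 := by
    rw [unipPlusClass_eq_shearClass, image_shearClass one_ne_zero]
  have hminus : fiberHomeomorphCone '' unipMinusClass = coneSheet (-1) := by
    rw [unipMinusClass_eq_shearClass, image_shearClass (neg_ne_zero.2 one_ne_zero)]
  have hpos : (⟨(0, 1, 1), by norm_num [coneV]⟩ : coneV) ∈ coneSheet 1 := by
    norm_num [coneSheet]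
  have hneg : (⟨(0, 1, -1), by norm_num [coneV]⟩ : coneV) ∈ coneSheet (-1) := by
    norm_num [coneSheet]
  refine ⟨fiberHomeomorphCone, ?_, ⟨_, coneSheet_subset_conePunctured _ hpos, ?_⟩,
    ⟨_, coneSheet_subset_conePunctured _ hneg, ?_⟩, ?_, fun p hp => ?_⟩
  · show ((fiberToCone _ : coneV) : ℝ × ℝ × ℝ) = _
    simp [fiberToCone]
  · rw [hplus, connectedComponentIn_conePunctured hpos]
  · rw [hminus, connectedComponentIn_conePunctured hneg]
  · rw [hplus, hminus]
    intro h
    have := h ▸ hpos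
    norm_num [coneSheet] at this
  · rw [hplus, hminus]
    rcases conePunctured_subset_union one_ne_zero hp with h | h
    · exact Or.inl (connectedComponentIn_conePunctured h)
    · exact Or.inr (connectedComponentIn_conePunctured h)
end

section
/- In SL(2,ℝ) with the topology induced from the matrix entries, the closure of the conjugacy class of [[1,1],[0,1]] is equal to that conjugacy class together with the identity matrix I₂; and likewise the closure of the conjugacy class of [[1,-1],[0,1]] is that class together with I₂. -/
open Matrix MatrixGroups Set

lemma closure_diff_singleton_of_mem_closure {X : Type*} [TopologicalSpace X] {s : Set X} {x : X}
    (hs : IsClosed s) (hx : x ∈ closure (s \ {x})) : closure (s \ {x}) = s \ {x} ∪ {x} := by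
  refine (closure_minimal sdiff_subset hs).trans ?_ |>.antisymm
    (union_subset subset_closure (singleton_subset_iff.2 hx))
  rw [sdiff_union_self]
  exact subset_union_left

lemma setOf_exists_eq_conj {G : Type*} [Group G] (a : G) :
    {x | ∃ g : G, x = g * a * g⁻¹} = conjugatesOf a := by
  ext x
  simp only [conjugatesOf, mem_ofPred_eq, isConj_iff, eq_comm]

lemma isCoprime_of_sq_add_sq_ne_zero {p r : ℝ} (h : p ^ 2 + r ^ 2 ≠ 0) : IsCoprime p r :=
  ⟨p / (p ^ 2 + r ^ 2), r / (p ^ 2 + r ^ 2), by field_simp⟩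

/-- `(p, r)` will be the first column of the conjugating matrix, cf. `coe_conj_transvection`. -/
lemma exists_transvection_conj_params {b a u v : ℝ} (hb : b ≠ 0) (hu : 0 ≤ b * u)
    (hv : b * v ≤ 0) (huv : u * v = -(a - 1) ^ 2) :
    ∃ p r : ℝ, b * p ^ 2 = u ∧ -(b * r ^ 2) = v ∧ b * (p * r) = 1 - a := by
  rcases eq_or_ne u 0 with rfl | hu0
  · have ha : a = 1 := by nlinarith
    have hvb : 0 ≤ -v / b := by
      rw [show -v / b = -(b * v) / b ^ 2 by field_simp]
      exact div_nonneg (neg_nonneg.2 hv) (sq_nonneg b)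
    refine ⟨0, √(-v / b), by simp, ?_, by simp [ha]⟩
    rw [Real.sq_sqrt hvb]
    field_simp
  · have hub : 0 < u / b := by
      rw [show u / b = b * u / b ^ 2 by field_simp]
      exact div_pos (hu.lt_of_ne (mul_ne_zero hb hu0).symm) (by positivity)
    have hp : √(u / b) ^ 2 = u / b := Real.sq_sqrt hub.le
    have hp0 : √(u / b) ≠ 0 := (Real.sqrt_pos.2 hub).ne'
    refine ⟨√(u / b), (1 - a) / (b * √(u / b)), ?_, ?_, ?_⟩
    · rw [hp]; field_simp
    · field_simp
      rw [hp]
      field_simp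
      linear_combination -huv
    · field_simp

namespace Matrix.SpecialLinearGroup

lemma transvection_eq_one_iff {ι R : Type*} [Fintype ι] [DecidableEq ι] [CommRing R] {i j : ι}
    (hij : i ≠ j) {b : R} : transvection hij b = 1 ↔ b = 0 := by
  refine ⟨fun h => ?_, fun h => h ▸ transvection_coeff_zero hij⟩
  simpa [transvection_coe, hij] using congrArg (fun A : SpecialLinearGroup ι R => A i j) h

lemma coe_transvection_zero_one {R : Type*} [CommRing R] (b : R) :
    ((transvection zero_ne_one b : SL(2, R)) : Matrix (Fin 2) (Fin 2) R) = !![1, b; 0, 1] := by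
  ext i j
  fin_cases i <;> fin_cases j <;> simp [transvection_coe]

lemma coe_conj_transvection {R : Type*} [CommRing R] (g : SL(2, R)) (b : R) :
    ((g * transvection zero_ne_one b * g⁻¹ : SL(2, R)) : Matrix (Fin 2) (Fin 2) R) =
      !![1 - b * (g 0 0 * g 1 0), b * g 0 0 ^ 2; -(b * g 1 0 ^ 2), 1 + b * (g 0 0 * g 1 0)] := by
  have hdet := g.det_coe
  rw [det_fin_two] at hdet
  rw [coe_mul, coe_mul, coe_inv, coe_transvection_zero_one,
    eta_fin_two (g : Matrix (Fin 2) (Fin 2) R), adjugate_fin_two, mul_fin_two, mul_fin_two]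
  ext i j
  fin_cases i <;> fin_cases j <;> simp <;> first | linear_combination hdet | ring

lemma continuous_transvection_zero_one :
    Continuous fun b : ℝ => (transvection zero_ne_one b : SL(2, ℝ)) :=
  continuous_induced_rng.2 <| by
    change Continuous fun b : ℝ =>
      ((transvection zero_ne_one b : SL(2, ℝ)) : Matrix (Fin 2) (Fin 2) ℝ)
    simp only [coe_transvection_zero_one]
    refine continuous_pi fun i => continuous_pi fun j => ?_
    fin_cases i <;> fin_cases j <;> simp <;> fun_prop

/-- Trace `2` means unipotent in `SL(2, ℝ)`, i.e. `A 0 1 * A 1 0 = -(A 0 0 - 1) ^ 2`; the sign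
conditions pick the half of this cone that contains `[[1, b], [0, 1]]`. -/
def unipotentHalfCone (b : ℝ) : Set SL(2, ℝ) :=
  {A | A 0 0 + A 1 1 = 2 ∧ 0 ≤ b * A 0 1 ∧ b * A 1 0 ≤ 0}

lemma isClosed_unipotentHalfCone (b : ℝ) : IsClosed (unipotentHalfCone b) := by
  have hentry (i j : Fin 2) : Continuous fun A : SL(2, ℝ) => A i j :=
    continuous_induced_dom.matrix_elem i j
  exact (isClosed_eq ((hentry 0 0).add (hentry 1 1)) continuous_const).inter
    ((isClosed_le continuous_const (continuous_const.mul (hentry 0 1))).inter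
      (isClosed_le (continuous_const.mul (hentry 1 0)) continuous_const))

lemma transvection_mem_unipotentHalfCone {b c : ℝ} (hbc : 0 ≤ b * c) :
    transvection zero_ne_one c ∈ unipotentHalfCone b := by
  simp only [unipotentHalfCone, mem_ofPred_eq, coe_transvection_zero_one, of_apply, cons_val',
    cons_val_zero, cons_val_one, empty_val', cons_val_fin_one]
  exact ⟨by norm_num, hbc, by simp⟩

lemma conj_transvection_mem_unipotentHalfCone (b : ℝ) (g : SL(2, ℝ)) :
    g * transvection zero_ne_one b * g⁻¹ ∈ unipotentHalfCone b := by
  simp only [unipotentHalfCone, mem_ofPred_eq, coe_conj_transvection, of_apply, cons_val',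
    cons_val_zero, cons_val_one, empty_val', cons_val_fin_one]
  exact ⟨by ring, by nlinarith [sq_nonneg (b * g 0 0)], by nlinarith [sq_nonneg (b * g 1 0)]⟩

lemma exists_conj_transvection_eq {b : ℝ} (hb : b ≠ 0) {A : SL(2, ℝ)}
    (hA : A ∈ unipotentHalfCone b) (hA1 : A ≠ 1) :
    ∃ g : SL(2, ℝ), g * transvection zero_ne_one b * g⁻¹ = A := by
  obtain ⟨htr, hu, hv⟩ := hA
  have hdet := A.det_coe
  rw [det_fin_two] at hdet
  obtain ⟨p, r, hp, hr, hpr⟩ :=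
    exists_transvection_conj_params (a := A 0 0) hb hu hv (by linear_combination A 0 0 * htr - hdet)
  have hpr0 : p ^ 2 + r ^ 2 ≠ 0 := by
    intro h0
    have hp0 : p = 0 := by nlinarith
    have hr0 : r = 0 := by nlinarith
    subst hp0 hr0
    refine hA1 (ext _ _ fun i j => ?_)
    fin_cases i <;> fin_cases j <;> simp <;> linarith
  obtain ⟨g, hg0, hg1⟩ := (isCoprime_of_sq_add_sq_ne_zero hpr0).exists_SL2_col 0
  refine ⟨g, Subtype.ext ?_⟩
  rw [coe_conj_transvection, hg0, hg1, eta_fin_two (A : Matrix (Fin 2) (Fin 2) ℝ)]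
  congr 1
  ext i j
  fin_cases i <;> fin_cases j <;> simp <;> linarith

lemma conjugatesOf_transvection {b : ℝ} (hb : b ≠ 0) :
    conjugatesOf (transvection zero_ne_one b : SL(2, ℝ)) = unipotentHalfCone b \ {1} := by
  ext A
  simp only [conjugatesOf, mem_ofPred_eq, isConj_iff]
  constructor
  · rintro ⟨g, rfl⟩
    refine ⟨conj_transvection_mem_unipotentHalfCone b g, fun h1 => hb ?_⟩
    exact (transvection_eq_one_iff _).1 (isConj_one_left.1 (isConj_iff.2 ⟨g, h1⟩))
  · rintro ⟨hA, hA1⟩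
    exact exists_conj_transvection_eq hb hA hA1

lemma one_mem_closure_conjugatesOf_transvection {b : ℝ} (hb : b ≠ 0) :
    (1 : SL(2, ℝ)) ∈ closure (conjugatesOf (transvection zero_ne_one b)) := by
  have hcont : Continuous fun t : ℝ => (transvection zero_ne_one (t * b) : SL(2, ℝ)) :=
    continuous_transvection_zero_one.comp (continuous_id.mul continuous_const)
  have hmaps : MapsTo (fun t : ℝ => (transvection zero_ne_one (t * b) : SL(2, ℝ))) (Ioi 0)
      (conjugatesOf (transvection zero_ne_one b)) := by
    intro t (ht : 0 < t)
    rw [conjugatesOf_transvection hb]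
    refine ⟨transvection_mem_unipotentHalfCone ?_, fun h1 => ?_⟩
    · nlinarith [mul_nonneg ht.le (sq_nonneg b)]
    · exact mul_ne_zero ht.ne' hb ((transvection_eq_one_iff _).1 h1)
  simpa using map_mem_closure hcont (show (0 : ℝ) ∈ closure (Ioi 0) by simp [closure_Ioi]) hmaps

theorem closure_conjugatesOf_transvection {b : ℝ} (hb : b ≠ 0) :
    closure (conjugatesOf (transvection zero_ne_one b : SL(2, ℝ))) =
      conjugatesOf (transvection zero_ne_one b) ∪ {1} := by
  have h1 := one_mem_closure_conjugatesOf_transvection hb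
  rw [conjugatesOf_transvection hb] at h1 ⊢
  exact closure_diff_singleton_of_mem_closure (isClosed_unipotentHalfCone b) h1

end Matrix.SpecialLinearGroup

lemma unipPlusSL2R_eq_transvection : unipPlusSL2R = SpecialLinearGroup.transvection zero_ne_one 1 :=
  Subtype.ext (SpecialLinearGroup.coe_transvection_zero_one 1).symm

lemma unipMinusSL2R_eq_transvection :
    unipMinusSL2R = SpecialLinearGroup.transvection zero_ne_one (-1) :=
  Subtype.ext (SpecialLinearGroup.coe_transvection_zero_one (-1)).symm

/-- In `SL(2,ℝ)`, the closure of the conjugacy class of `[[1,1],[0,1]]`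
is that class together with `I₂`, and likewise for the conjugacy class of
`[[1,-1],[0,1]]`. -/
theorem closure_unipotent_classes_SL2R :
    closure {A : Matrix.SpecialLinearGroup (Fin 2) ℝ |
        ∃ g : Matrix.SpecialLinearGroup (Fin 2) ℝ, A = g * unipPlusSL2R * g⁻¹} =
      {A : Matrix.SpecialLinearGroup (Fin 2) ℝ |
        ∃ g : Matrix.SpecialLinearGroup (Fin 2) ℝ, A = g * unipPlusSL2R * g⁻¹} ∪ {1} ∧
    closure {A : Matrix.SpecialLinearGroup (Fin 2) ℝ |
        ∃ g : Matrix.SpecialLinearGroup (Fin 2) ℝ, A = g * unipMinusSL2R * g⁻¹} =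
      {A : Matrix.SpecialLinearGroup (Fin 2) ℝ |
        ∃ g : Matrix.SpecialLinearGroup (Fin 2) ℝ, A = g * unipMinusSL2R * g⁻¹} ∪ {1} := by
  rw [setOf_exists_eq_conj, setOf_exists_eq_conj, unipPlusSL2R_eq_transvection,
    unipMinusSL2R_eq_transvection]
  exact ⟨SpecialLinearGroup.closure_conjugatesOf_transvection one_ne_zero,
    SpecialLinearGroup.closure_conjugatesOf_transvection (neg_ne_zero.2 one_ne_zero)⟩
end

section
/- For every n ≥ 1, the Cartan decomposition map m : SO(n) × p → SL(n,ℝ), m(k, ζ) = k · exp(ζ), where p is the space of symmetric traceless real n×n matrices and exp denotes the matrix exponential, is a bijection: every A ∈ SL(n,ℝ) can be written uniquely as A = k · exp(ζ) with k ∈ SO(n) and ζ symmetric and traceless. -/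
/-!
`AᵀA` is positive definite, so it is `exp w` for a unique symmetric `w` (its logarithm in the
continuous functional calculus). If `A = k * exp ζ` with `k` orthogonal and `ζ` symmetric, then
`AᵀA = exp (2ζ)`, which forces `ζ = w / 2` and `k = A * exp (-ζ)`; conversely these two matrices
decompose `A`. Finally `det A = det k * e ^ tr ζ` with `det k = ±1`, so `det A = 1` forces
`det k = 1` and `tr ζ = 0`.
-/

open NormedSpace

namespace Matrix

variable {m : Type*} [Fintype m] [DecidableEq m]

lemma IsHermitian.det_cfc {𝕜 : Type*} [RCLike 𝕜] {A : Matrix m m 𝕜} (hA : A.IsHermitian)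
    (f : ℝ → ℝ) : (cfc f A).det = ∏ i, (f (hA.eigenvalues i) : 𝕜) := by
  simp [hA.cfc_eq, IsHermitian.cfc, -Unitary.conjStarAlgAut_apply]

lemma IsHermitian.det_exp {z : Matrix m m ℝ} (hz : z.IsHermitian) :
    (NormedSpace.exp z).det = Real.exp z.trace := by
  let : NormedRing (Matrix m m ℝ) := instL2OpNormedRing
  let : NormedAlgebra ℝ (Matrix m m ℝ) := instL2OpNormedAlgebra
  rw [← CFC.real_exp_eq_normedSpace_exp hz.isSelfAdjoint, hz.det_cfc,
    hz.trace_eq_sum_eigenvalues, Real.exp_sum]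
  rfl

lemma exp_injOn_isHermitian : Set.InjOn (exp : Matrix m m ℝ → _) {z | z.IsHermitian} := by
  intro z hz w hw h
  let : NormedRing (Matrix m m ℝ) := instL2OpNormedRing
  let : NormedAlgebra ℝ (Matrix m m ℝ) := instL2OpNormedAlgebra
  rw [← CFC.log_exp z hz.isSelfAdjoint, ← CFC.log_exp w hw.isSelfAdjoint, h]

open scoped MatrixOrder in
lemma PosDef.exists_isHermitian_exp_eq {S : Matrix m m ℝ} (hS : S.PosDef) :
    ∃ z : Matrix m m ℝ, z.IsHermitian ∧ exp z = S := by
  let : NormedRing (Matrix m m ℝ) := instL2OpNormedRing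
  let : NormedAlgebra ℝ (Matrix m m ℝ) := instL2OpNormedAlgebra
  exact ⟨CFC.log S, IsSelfAdjoint.log, CFC.exp_log S hS.isStrictlyPositive⟩

lemma exp_neg_mul_exp_self (z : Matrix m m ℝ) : exp (-z) * exp z = 1 := by
  rw [← exp_add_of_commute _ _ (Commute.refl z).neg_left, neg_add_cancel, exp_zero]

lemma exp_mul_exp_neg_self (z : Matrix m m ℝ) : exp z * exp (-z) = 1 := by
  rw [← exp_add_of_commute _ _ (Commute.refl z).neg_right, add_neg_cancel, exp_zero]

variable {k z : Matrix m m ℝ}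

lemma transpose_mul_self_eq_exp_add_self (hk : kᵀ * k = 1) (hz : zᵀ = z) :
    (k * exp z)ᵀ * (k * exp z) = exp (z + z) := by
  rw [transpose_mul, ← exp_transpose, hz, exp_add_of_commute z z (Commute.refl z)]
  calc exp z * kᵀ * (k * exp z) = exp z * (kᵀ * k) * exp z := by simp only [Matrix.mul_assoc]
    _ = exp z * exp z := by rw [hk, Matrix.mul_one]

lemma eq_of_mul_exp_eq_mul_exp {k' z' : Matrix m m ℝ} (hk : kᵀ * k = 1) (hz : zᵀ = z)
    (hk' : k'ᵀ * k' = 1) (hz' : z'ᵀ = z') (h : k * exp z = k' * exp z') : k = k' ∧ z = z' := by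
  have hzz : z + z = z' + z' := by
    have hzH : z.IsHermitian := isHermitian_iff_isSymm.mpr hz
    have hzH' : z'.IsHermitian := isHermitian_iff_isSymm.mpr hz'
    refine exp_injOn_isHermitian (hzH.add hzH) (hzH'.add hzH') ?_
    rw [← transpose_mul_self_eq_exp_add_self hk hz, h, transpose_mul_self_eq_exp_add_self hk' hz']
  obtain rfl : z = z' :=
    smul_right_injective _ (two_ne_zero (α := ℝ)) (by simpa only [two_smul] using hzz)
  exact ⟨(isUnit_exp z).mul_left_injective h, rfl⟩

lemma exists_orthogonal_mul_exp_of_det_ne_zero {A : Matrix m m ℝ} (hA : A.det ≠ 0) :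
    ∃ k z : Matrix m m ℝ, kᵀ * k = 1 ∧ zᵀ = z ∧ A = k * exp z := by
  have hS : (Aᵀ * A).PosDef := by
    simpa using (posSemidef_conjTranspose_mul_self A).posDef_iff_det_ne_zero.mpr (by simpa using hA)
  obtain ⟨w, hw, hexp⟩ := hS.exists_isHermitian_exp_eq
  set z := (2⁻¹ : ℝ) • w
  have hzz : z + z = w := by module
  have hz : zᵀ = z := by simpa [z, isHermitian_iff_isSymm, IsSymm] using hw
  refine ⟨A * exp (-z), z, ?_, hz, ?_⟩
  · have hsq : exp z * exp z = Aᵀ * A := by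
      rw [← exp_add_of_commute z z (Commute.refl z), hzz, hexp]
    rw [transpose_mul, ← exp_transpose, transpose_neg, hz]
    calc exp (-z) * Aᵀ * (A * exp (-z)) = exp (-z) * (Aᵀ * A) * exp (-z) := by
          simp only [Matrix.mul_assoc]
      _ = (exp (-z) * exp z) * (exp z * exp (-z)) := by rw [← hsq]; simp only [Matrix.mul_assoc]
      _ = 1 := by rw [exp_neg_mul_exp_self, exp_mul_exp_neg_self, Matrix.mul_one]
  · rw [Matrix.mul_assoc, exp_neg_mul_exp_self, Matrix.mul_one]

lemma det_eq_one_and_trace_eq_zero_of_det_mul_exp_eq_one (hk : kᵀ * k = 1) (hz : zᵀ = z)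
    (h : (k * exp z).det = 1) : k.det = 1 ∧ z.trace = 0 := by
  have hk2 : k.det * k.det = 1 := by simpa [det_transpose] using congr_arg det hk
  rw [det_mul, (isHermitian_iff_isSymm.mpr hz).det_exp] at h
  have hpos := Real.exp_pos z.trace
  have hdet : k.det = 1 := by nlinarith
  rw [hdet, one_mul, Real.exp_eq_one_iff] at h
  exact ⟨hdet, h⟩

end Matrix

theorem cartan_decomposition_SLnR_general (n : ℕ)
    (A : Matrix (Fin n) (Fin n) ℝ) (hA : A.det = 1) :
    ∃! p : {k : Matrix (Fin n) (Fin n) ℝ // k.transpose * k = 1 ∧ k.det = 1} ×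
           {z : Matrix (Fin n) (Fin n) ℝ // z.transpose = z ∧ z.trace = 0},
      A = (p.1 : Matrix (Fin n) (Fin n) ℝ) *
        NormedSpace.exp (p.2 : Matrix (Fin n) (Fin n) ℝ) := by
  obtain ⟨k, z, hk, hz, rfl⟩ := Matrix.exists_orthogonal_mul_exp_of_det_ne_zero (hA ▸ one_ne_zero)
  obtain ⟨hdet, htr⟩ := Matrix.det_eq_one_and_trace_eq_zero_of_det_mul_exp_eq_one hk hz hA
  refine ⟨⟨⟨k, hk, hdet⟩, ⟨z, hz, htr⟩⟩, rfl, ?_⟩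
  rintro ⟨⟨k', hk', -⟩, ⟨z', hz', -⟩⟩ (h : k * exp z = k' * exp z')
  obtain ⟨rfl, rfl⟩ := Matrix.eq_of_mul_exp_eq_mul_exp hk' hz' hk hz h.symm
  rfl

/-- (Cartan decomposition for `SL(n,ℝ)`.) For every `n ≥ 1`, every
real `n×n` matrix `A` of determinant `1` can be written uniquely as `A = k · exp(ζ)` with
`k ∈ SO(n)` (i.e. `kᵀk = 1` and `det k = 1`) and `ζ` symmetric and traceless; that is,
the map `(k, ζ) ↦ k · exp(ζ)` from `SO(n) × p` to `SL(n,ℝ)` is a bijection. -/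
theorem cartan_decomposition_SLnR (n : ℕ) (hn : 1 ≤ n)
    (A : Matrix (Fin n) (Fin n) ℝ) (hA : A.det = 1) :
    ∃! p : {k : Matrix (Fin n) (Fin n) ℝ // k.transpose * k = 1 ∧ k.det = 1} ×
           {z : Matrix (Fin n) (Fin n) ℝ // z.transpose = z ∧ z.trace = 0},
      A = (p.1 : Matrix (Fin n) (Fin n) ℝ) *
        NormedSpace.exp (p.2 : Matrix (Fin n) (Fin n) ℝ) :=
  cartan_decomposition_SLnR_general n A hA
end

section
/- An element A ∈ SL(2,ℝ) is strongly stable, i.e. its centralizer {g ∈ SL(2,ℝ) : g·A = A·g} is a compact subset of SL(2,ℝ), if and only if -2 < tr A < 2. Consequently the set D of strongly stable elements of SL(2,ℝ) equals Tr⁻¹((-2,2)) and is open and nonempty. -/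
def stronglyStableSL2R : Set (Matrix.SpecialLinearGroup (Fin 2) ℝ) :=
  {A | IsCompact {g : Matrix.SpecialLinearGroup (Fin 2) ℝ | g * A = A * g}}

namespace Matrix

variable {K : Type*} [Field K]

/-- Coordinates `(b, c, a - d)` of the traceless part of `A = !![a, b; c, d]`. In them the
commutator `g * A - A * g` of `2 × 2` matrices becomes the cross product. -/
def tracelessCoords (A : Matrix (Fin 2) (Fin 2) K) : Fin 3 → K :=
  ![A 0 1, A 1 0, A 0 0 - A 1 1]

lemma tracelessCoords_eq_zero_iff {A : Matrix (Fin 2) (Fin 2) K} :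
    tracelessCoords A = 0 ↔ A = A 0 0 • 1 := by
  simp [tracelessCoords, ← Matrix.ext_iff, funext_iff, Fin.forall_fin_succ]
  grind

lemma tracelessCoords_smul_one_add_smul (A : Matrix (Fin 2) (Fin 2) K) (c d : K) :
    tracelessCoords (c • 1 + d • A) = d • tracelessCoords A := by
  ext i; fin_cases i <;> simp [tracelessCoords]; ring

lemma cross_tracelessCoords_eq_zero_of_commute {g A : Matrix (Fin 2) (Fin 2) K}
    (h : Commute g A) : tracelessCoords g ⨯₃ tracelessCoords A = 0 := by
  have e : ∀ i j, (g * A) i j = (A * g) i j := fun i j => by rw [h.eq]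
  simp only [mul_apply, Fin.sum_univ_two] at e
  ext i; fin_cases i <;> simp [tracelessCoords, cross_apply]
  · linear_combination e 1 0
  · linear_combination e 0 1
  · linear_combination e 0 0

lemma exists_eq_smul_one_add_smul_of_commute {g A : Matrix (Fin 2) (Fin 2) K}
    (hA : tracelessCoords A ≠ 0) (h : Commute g A) : ∃ c d : K, g = c • 1 + d • A := by
  have hdep : ¬LinearIndependent K ![tracelessCoords A, tracelessCoords g] := by
    rw [← crossProduct_ne_zero_iff_linearIndependent, not_not, ← cross_anticomm,
      cross_tracelessCoords_eq_zero_of_commute h, neg_zero]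
  obtain ⟨d, hd⟩ := not_forall_not.1 ((LinearIndependent.pair_iff' hA).not.1 hdep)
  refine ⟨g 0 0 - d * A 0 0, d, ?_⟩
  obtain ⟨h01, h10, hdiag⟩ :
      d * A 0 1 = g 0 1 ∧ d * A 1 0 = g 1 0 ∧ d * (A 0 0 - A 1 1) = g 0 0 - g 1 1 := by
    simpa [tracelessCoords, funext_iff, Fin.forall_fin_succ] using hd
  ext i j; fin_cases i <;> fin_cases j <;> simp
  · linear_combination -h01
  · linear_combination -h10
  · linear_combination hdiag

section CommRing

variable {R : Type*} [CommRing R]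

lemma det_smul_one_add_smul (A : Matrix (Fin 2) (Fin 2) R) (c d : R) :
    (c • 1 + d • A).det = c ^ 2 + c * d * A.trace + d ^ 2 * A.det := by
  simp [det_fin_two, trace_fin_two]; ring

variable {n : Type*} [DecidableEq n]

def pencil (A : Matrix n n R) : R × R →ₗ[R] Matrix n n R :=
  (LinearMap.fst R R R).smulRight 1 + (LinearMap.snd R R R).smulRight A

@[simp]
lemma pencil_apply (A : Matrix n n R) (p : R × R) : pencil A p = p.1 • 1 + p.2 • A := rfl

end CommRing

lemma ker_pencil_eq_bot {A : Matrix (Fin 2) (Fin 2) K}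
    (hA : tracelessCoords A ≠ 0) : LinearMap.ker (pencil A) = ⊥ := by
  refine LinearMap.ker_eq_bot'.2 fun ⟨c, d⟩ h => ?_
  have hd : d • tracelessCoords A = 0 := by
    rw [← tracelessCoords_smul_one_add_smul A c, ← pencil_apply A (c, d), h]
    simp [tracelessCoords]
  obtain rfl : d = 0 := (smul_eq_zero.1 hd).resolve_right hA
  simpa using congrFun (congrFun h 0) 0

end Matrix

def unitConic (t : ℝ) : Set (ℝ × ℝ) := {p | p.1 ^ 2 + p.1 * p.2 * t + p.2 ^ 2 = 1}

lemma isCompact_unitConic {t : ℝ} (ht : |t| < 2) : IsCompact (unitConic t) := by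
  have hclosed : IsClosed (unitConic t) := isClosed_eq (by fun_prop) continuous_const
  refine Metric.isCompact_of_isClosed_isBounded hclosed ?_
  rw [Metric.isBounded_iff_subset_closedBall 0]
  refine ⟨1 + 2 / (2 - |t|), fun p (hp : _ = 1) => ?_⟩
  have hpos : 0 < 2 - |t| := by linarith
  have hcross : -(|t| * (p.1 ^ 2 + p.2 ^ 2)) ≤ 2 * (p.1 * p.2 * t) := by
    cases abs_cases t <;> nlinarith [sq_nonneg (p.1 + p.2), sq_nonneg (p.1 - p.2)]
  have hsq : p.1 ^ 2 + p.2 ^ 2 ≤ 2 / (2 - |t|) := by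
    rw [le_div_iff₀ hpos]; nlinarith
  rw [mem_closedBall_zero_iff, Prod.norm_def, Real.norm_eq_abs, Real.norm_eq_abs]
  exact max_le (by nlinarith [sq_abs p.1, sq_nonneg (|p.1| - 1), abs_nonneg p.1])
    (by nlinarith [sq_abs p.2, sq_nonneg (|p.2| - 1), abs_nonneg p.2])

lemma snd_image_unitConic {t : ℝ} (ht : 2 ≤ |t|) : Prod.snd '' unitConic t = Set.univ := by
  refine Set.eq_univ_of_forall fun d => ?_
  have ht2 : 4 ≤ t ^ 2 := by nlinarith [sq_abs t]
  have hdisc : 0 ≤ (t ^ 2 - 4) * d ^ 2 + 4 := by nlinarith [sq_nonneg d]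
  refine ⟨((√((t ^ 2 - 4) * d ^ 2 + 4) - t * d) / 2, d), ?_, rfl⟩
  show _ = _
  nlinarith [Real.sq_sqrt hdisc]

lemma isCompact_unitConic_iff {t : ℝ} : IsCompact (unitConic t) ↔ |t| < 2 := by
  refine ⟨fun h => ?_, isCompact_unitConic⟩
  by_contra! ht
  exact noncompact_univ ℝ (snd_image_unitConic ht ▸ h.image continuous_snd)


open Matrix Topology
open scoped MatrixGroups

local notation "M₂(ℝ)" => Matrix (Fin 2) (Fin 2) ℝ

lemma isEmbedding_coe_SL2R : @IsEmbedding SL(2, ℝ) M₂(ℝ) _ _ (↑) :=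
  ⟨⟨rfl⟩, Subtype.coe_injective⟩

instance : NoncompactSpace SL(2, ℝ) := by
  refine ⟨fun h => noncompact_univ ℝ ?_⟩
  have hsurj : (fun g : SL(2, ℝ) => (g : M₂(ℝ)) 0 0) '' Set.univ = Set.univ :=
    Set.eq_univ_of_forall fun x => ⟨⟨!![x, 1; -1, 0], by simp [det_fin_two]⟩, trivial, rfl⟩
  exact hsurj ▸ h.image (isEmbedding_coe_SL2R.continuous.matrix_elem 0 0)

lemma coe_image_centralizer_SL2R {A : SL(2, ℝ)} (hA : tracelessCoords (A : M₂(ℝ)) ≠ 0) :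
    Set.image (α := SL(2, ℝ)) (↑) {g | g * A = A * g} =
      pencil (A : M₂(ℝ)) '' unitConic (trace (A : M₂(ℝ))) := by
  have hdet (c d : ℝ) :
      det (c • 1 + d • (A : M₂(ℝ))) = c ^ 2 + c * d * trace (A : M₂(ℝ)) + d ^ 2 := by
    rw [det_smul_one_add_smul, A.2, mul_one]
  ext M
  constructor
  · rintro ⟨g, hg, rfl⟩
    obtain ⟨c, d, hcd⟩ := exists_eq_smul_one_add_smul_of_commute hA
      (congrArg Subtype.val hg : Commute (g : M₂(ℝ)) A)
    exact ⟨(c, d), (hdet c d).symm.trans (hcd ▸ g.2), hcd.symm⟩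
  · rintro ⟨⟨c, d⟩, hp, rfl⟩
    refine ⟨⟨c • 1 + d • (A : M₂(ℝ)), (hdet c d).trans hp⟩, ?_, rfl⟩
    exact Subtype.ext (show (c • 1 + d • (A : M₂(ℝ))) * A = A * (c • 1 + d • A) by
      simp [add_mul, mul_add])

lemma isCompact_centralizer_SL2R_iff (A : SL(2, ℝ)) :
    IsCompact {g : SL(2, ℝ) | g * A = A * g} ↔ |trace (A : M₂(ℝ))| < 2 := by
  by_cases hA : tracelessCoords (A : M₂(ℝ)) = 0
  · obtain ⟨c, hc⟩ : ∃ c : ℝ, (A : M₂(ℝ)) = c • 1 :=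
      ⟨_, tracelessCoords_eq_zero_iff.1 hA⟩
    have hcent : {g : SL(2, ℝ) | g * A = A * g} = Set.univ :=
      Set.eq_univ_of_forall fun g => Subtype.ext (show (g : M₂(ℝ)) * A = A * g by simp [hc])
    have hsq : c ^ 2 = 1 := by simpa [hc, det_smul] using A.2
    have htr : |trace (A : M₂(ℝ))| = 2 := by
      rcases sq_eq_one_iff.1 hsq with rfl | rfl <;> norm_num [hc]
    simp [hcent, noncompact_univ, htr]
  · have hpencil := LinearMap.isClosedEmbedding_of_injective (ker_pencil_eq_bot hA)
    rw [isEmbedding_coe_SL2R.isCompact_iff, coe_image_centralizer_SL2R hA,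
      ← hpencil.isEmbedding.isCompact_iff, isCompact_unitConic_iff]

/-- An element `A ∈ SL(2,ℝ)` is strongly stable (its centralizer is
compact) if and only if `-2 < tr A < 2`; consequently the set `D` of strongly stable
elements equals `Tr⁻¹((-2,2))` and is open and nonempty. -/
theorem strongly_stable_SL2R :
    (∀ A : Matrix.SpecialLinearGroup (Fin 2) ℝ,
      IsCompact {g : Matrix.SpecialLinearGroup (Fin 2) ℝ | g * A = A * g} ↔
        (-2 < Matrix.trace (A : Matrix (Fin 2) (Fin 2) ℝ) ∧
          Matrix.trace (A : Matrix (Fin 2) (Fin 2) ℝ) < 2)) ∧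
    stronglyStableSL2R =
      {A : Matrix.SpecialLinearGroup (Fin 2) ℝ |
        Matrix.trace (A : Matrix (Fin 2) (Fin 2) ℝ) ∈ Set.Ioo (-2 : ℝ) 2} ∧
    IsOpen stronglyStableSL2R ∧
    stronglyStableSL2R.Nonempty := by
  have hiff (A : SL(2, ℝ)) : IsCompact {g : SL(2, ℝ) | g * A = A * g} ↔
      -2 < trace (A : M₂(ℝ)) ∧ trace (A : M₂(ℝ)) < 2 :=
    (isCompact_centralizer_SL2R_iff A).trans abs_lt
  have hD : stronglyStableSL2R = {A : SL(2, ℝ) | trace (A : M₂(ℝ)) ∈ Set.Ioo (-2) 2} :=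
    Set.ext hiff
  refine ⟨hiff, hD, ?_, ?_⟩
  · rw [hD]
    exact isOpen_Ioo.preimage isEmbedding_coe_SL2R.continuous.matrix_trace
  · rw [hD]
    exact ⟨⟨!![0, -1; 1, 0], by simp [det_fin_two]⟩,
      show trace !![(0 : ℝ), -1; 1, 0] ∈ Set.Ioo (-2) 2 by norm_num [trace_fin_two]⟩
end

section
/- Let θ ∈ ℝ with sin θ ≠ 0 and let R_θ = [[cos θ, -sin θ],[sin θ, cos θ]] ∈ SL(2,ℝ). Then the conjugation orbit map g ↦ g · R_θ · g⁻¹ from SL(2,ℝ) to SL(2,ℝ) is a proper map (the preimage of every compact subset of SL(2,ℝ) is compact). In particular, SL(2,ℝ) acts properly by conjugation on the conjugacy class of R_θ. -/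
/-- The rotation matrix `R_θ = [[cos θ, -sin θ],[sin θ, cos θ]]` as an element of
`SL(2,ℝ)`. -/
noncomputable def rotSL (θ : ℝ) : Matrix.SpecialLinearGroup (Fin 2) ℝ :=
  ⟨!![Real.cos θ, -Real.sin θ; Real.sin θ, Real.cos θ], by
    rw [Matrix.det_fin_two_of]; nlinarith [Real.sin_sq_add_cos_sq θ]⟩

/-!
Write `R_θ = cos θ • 1 + sin θ • J` with `J = [[0, -1], [1, 0]]`. The difference of the
off-diagonal entries of `g R_θ g⁻¹` is then `sin θ` times the sum of the squares of the entries
of `g`, a continuous function of `g R_θ g⁻¹`. Hence on the preimage of a compact set the entries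
of `g` are bounded, and bounded closed subsets of `SL(2,ℝ)` are compact since `SL(2,ℝ)` is closed
in the matrices.
-/

open Matrix
open scoped MatrixGroups

-- The topology above is Mathlib's subtype topology, declared as a separate instance, so
-- instance search does not see Mathlib's instances for it.
instance : IsTopologicalGroup SL(2, ℝ) := Matrix.SpecialLinearGroup.topologicalGroup

instance : T2Space SL(2, ℝ) := Matrix.SpecialLinearGroup.isClosedEmbedding_val.isEmbedding.t2Space

theorem Matrix.isCompact_setOf_sum_sq_apply_le {m n : Type*} [Fintype m] [Fintype n] (C : ℝ) :
    IsCompact {A : Matrix m n ℝ | ∑ i, ∑ j, A i j ^ 2 ≤ C} := by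
  have hbox := isCompact_univ_pi fun _ : m => isCompact_univ_pi fun _ : n =>
    isCompact_Icc (a := -√C) (b := √C)
  refine hbox.of_isClosed_subset (isClosed_le (by fun_prop) continuous_const)
    fun A hA i _ j _ => abs_le.mp (Real.abs_le_sqrt ?_)
  calc A i j ^ 2 ≤ ∑ j', A i j' ^ 2 :=
        Finset.single_le_sum (fun _ _ => sq_nonneg _) (Finset.mem_univ j)
    _ ≤ ∑ i', ∑ j', A i' j' ^ 2 :=
        Finset.single_le_sum (f := fun i' => ∑ j', A i' j' ^ 2)
          (fun _ _ => Finset.sum_nonneg fun _ _ => sq_nonneg _) (Finset.mem_univ i)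
    _ ≤ C := hA

theorem Matrix.SpecialLinearGroup.isCompact_setOf_sum_sq_apply_le {n : Type*} [Fintype n]
    [DecidableEq n] (C : ℝ) :
    IsCompact {g : Matrix.SpecialLinearGroup n ℝ | ∑ i, ∑ j, g i j ^ 2 ≤ C} :=
  isClosedEmbedding_val.isCompact_preimage (Matrix.isCompact_setOf_sum_sq_apply_le C)

theorem rotSL_conj_apply_one_zero_sub_apply_zero_one (θ : ℝ) (g : SL(2, ℝ)) :
    (g * rotSL θ * g⁻¹) 1 0 - (g * rotSL θ * g⁻¹) 0 1 = Real.sin θ * ∑ i, ∑ j, g i j ^ 2 := by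
  rw [Matrix.SpecialLinearGroup.coe_mul, Matrix.SpecialLinearGroup.coe_mul,
    Matrix.SpecialLinearGroup.coe_inv]
  simp only [rotSL, adjugate_fin_two, mul_apply, of_apply, cons_val', cons_val_fin_one,
    Fin.sum_univ_two, cons_val_zero, cons_val_one]
  ring

/-- For `θ` with `sin θ ≠ 0`, the conjugation orbit map
`g ↦ g · R_θ · g⁻¹` on `SL(2,ℝ)` is a proper map: it is continuous and the preimage of
every compact subset of `SL(2,ℝ)` is compact. -/
theorem conjugation_orbit_map_proper_SL2R (θ : ℝ) (hθ : Real.sin θ ≠ 0) :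
    Continuous (fun g : Matrix.SpecialLinearGroup (Fin 2) ℝ => g * rotSL θ * g⁻¹) ∧
    ∀ K : Set (Matrix.SpecialLinearGroup (Fin 2) ℝ), IsCompact K →
      IsCompact ((fun g : Matrix.SpecialLinearGroup (Fin 2) ℝ => g * rotSL θ * g⁻¹) ⁻¹' K) := by
  have hconj : Continuous fun g : SL(2, ℝ) => g * rotSL θ * g⁻¹ := by fun_prop
  refine ⟨hconj, fun K hK => ?_⟩
  obtain ⟨C, hC⟩ := (hK.image (f := fun h : SL(2, ℝ) => (h 1 0 - h 0 1) / Real.sin θ)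
    (by fun_prop)).bddAbove
  refine (Matrix.SpecialLinearGroup.isCompact_setOf_sum_sq_apply_le C).of_isClosed_subset
    (hK.isClosed.preimage hconj) fun g hg => ?_
  have hbound : ((g * rotSL θ * g⁻¹) 1 0 - (g * rotSL θ * g⁻¹) 0 1) / Real.sin θ ≤ C :=
    hC ⟨_, hg, rfl⟩
  rwa [rotSL_conj_apply_one_zero_sub_apply_zero_one, mul_div_cancel_left₀ _ hθ] at hbound
end
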